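/- Let ω ∈ (0,π] and suppose that for some 0 < α < 2πω there exists H > 0 such that ∫_ℝ (e^{(α/(2π)) v²} − 1) dx ≤ H ‖v‖²_{L²(ℝ)} for every v ∈ H^{1/2}(ℝ) with [v] ≤ (2π)^{1/2}. Then for all u ∈ X with ‖u‖_X ≤ 1 one has ∫₀¹ e^{α u²} dx ≤ 2πH/λ₁ + 1. -/

import Mathlib

open MeasureTheory Real Set Filter Topology

noncomputable section

/-- Integrand of the squared Gagliardo `H^{1/2}` seminorm on `ℝ`. -/
def gagKer (u : ℝ → ℝ) : ℝ × ℝ → ℝ :=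
  fun p => (u p.1 - u p.2) ^ 2 / |p.1 - p.2| ^ 2

/-- Integrand of the Gagliardo inner product `⟨u,v⟩_X`. -/
def innerKer (u v : ℝ → ℝ) : ℝ × ℝ → ℝ :=
  fun p => (u p.1 - u p.2) * (v p.1 - v p.2) / |p.1 - p.2| ^ 2

/-- `u ∈ H^{1/2}(ℝ)` : `u ∈ L²(ℝ)` with finite Gagliardo seminorm. -/
def memH (u : ℝ → ℝ) : Prop :=
  Measurable u ∧ Integrable (fun x => (u x) ^ 2) ∧ Integrable (gagKer u)

/-- Squared Gagliardo seminorm `[u]²`. -/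
def gagSq (u : ℝ → ℝ) : ℝ := ∫ p : ℝ × ℝ, gagKer u p

/-- Gagliardo seminorm `[u]`, i.e. the norm `‖u‖_X`. -/
def gagNorm (u : ℝ → ℝ) : ℝ := Real.sqrt (gagSq u)

/-- Inner product `⟨u, v⟩_X`. -/
def innerX (u v : ℝ → ℝ) : ℝ := ∫ p : ℝ × ℝ, innerKer u v p

/-- `u ∈ X` : `u ∈ H^{1/2}(ℝ)` and `u = 0` a.e. outside `(0,1)`. -/
def memX (u : ℝ → ℝ) : Prop :=
  memH u ∧ ∀ᵐ x : ℝ, x ∉ Ioo (0 : ℝ) 1 → u x = 0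

/-- `λ₁ = inf {[u]² : u ∈ X, ‖u‖_{L²(0,1)} = 1}`. -/
def lam1 : ℝ :=
  sInf { t : ℝ | ∃ u : ℝ → ℝ, memX u ∧ (∫ x in Ioo (0 : ℝ) 1, (u x) ^ 2) = 1 ∧ gagSq u = t }

/-- Trudinger–Moser property with constant `ω`. -/
def TMprop (ω : ℝ) : Prop :=
  ∀ α : ℝ, 0 < α → α < 2 * π * ω →
    ∃ K : ℝ, 0 < K ∧ ∀ u : ℝ → ℝ, memX u → gagNorm u ≤ 1 →
      (∫⁻ x in Ioo (0 : ℝ) 1, ENNReal.ofReal (exp (α * (u x) ^ 2))) ≤ ENNReal.ofReal K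

/-- The primitive `F(t) = ∫₀ᵗ f(τ) dτ`. -/
def primF (f : ℝ → ℝ) : ℝ → ℝ := fun t => ∫ τ in (0 : ℝ)..t, f τ

/-- Hypotheses (H). -/
def HypH (f : ℝ → ℝ) : Prop :=
  Continuous f ∧ f 0 = 0 ∧
  (∃ t₀ > (0 : ℝ), ∃ M > (0 : ℝ),
    ∀ t : ℝ, t₀ ≤ |t| → 0 < primF f t ∧ primF f t ≤ M * |f t|) ∧
  (∀ t : ℝ, t ≠ 0 → 0 < 2 * primF f t ∧ 2 * primF f t ≤ f t * t) ∧
  (Filter.limsup (fun t => primF f t / t ^ 2) (𝓝[≠] (0 : ℝ)) < lam1 / (4 * π)) ∧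
  (∀ α : ℝ, 0 < α →
    Filter.Tendsto (fun t => |f t| * exp (-α * t ^ 2)) (Filter.cocompact ℝ) (𝓝 0))

/-- Hypotheses (H') with Trudinger–Moser constant `ω`. -/
def HypH' (f : ℝ → ℝ) (ω : ℝ) : Prop :=
  Continuous f ∧ f 0 = 0 ∧
  (∃ t₀ > (0 : ℝ), ∃ M > (0 : ℝ),
    ∀ t : ℝ, t₀ ≤ |t| → 0 < primF f t ∧ primF f t ≤ M * |f t|) ∧
  (∀ t : ℝ, t ≠ 0 → 0 < 2 * primF f t ∧ 2 * primF f t ≤ f t * t) ∧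
  (Filter.limsup (fun t => primF f t / t ^ 2) (𝓝[≠] (0 : ℝ)) < lam1 / (4 * π)) ∧
  ∃ α₀ : ℝ, 0 < α₀ ∧ α₀ < 2 * π * ω ∧
    (∀ α : ℝ, 0 < α → α < α₀ →
      Filter.Tendsto (fun t => |f t| * exp (-α * t ^ 2)) (Filter.cocompact ℝ) Filter.atTop) ∧
    (∀ α : ℝ, α₀ < α →
      Filter.Tendsto (fun t => |f t| * exp (-α * t ^ 2)) (Filter.cocompact ℝ) (𝓝 0)) ∧
    ∃ ψ : ℝ → ℝ, memX ψ ∧ gagNorm ψ = 1 ∧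
      ∃ b : ℝ, b < ω / (2 * α₀) ∧ ∀ t : ℝ, 0 < t →
        t ^ 2 / (4 * π) - (∫ x in Ioo (0 : ℝ) 1, primF f (t * ψ x)) ≤ b

/-- `u` is a (weak) solution of `(-Δ)^{1/2} u = f(u)` in `(0,1)`, `u = 0` outside. -/
def IsWeakSolution (f u : ℝ → ℝ) : Prop :=
  memX u ∧ ∀ v : ℝ → ℝ, memX v →
    IntegrableOn (fun x => f (u x) * v x) (Ioo (0 : ℝ) 1) ∧
    innerX u v / (2 * π) = ∫ x in Ioo (0 : ℝ) 1, f (u x) * v x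

/-- The energy functional `φ(u) = ‖u‖_X²/(4π) - ∫₀¹ F(u) dx`. -/
def phi (f u : ℝ → ℝ) : ℝ :=
  gagSq u / (4 * π) - ∫ x in Ioo (0 : ℝ) 1, primF f (u x)

/-- `⟨φ'(u), v⟩ = (1/(2π))⟨u,v⟩_X - ∫₀¹ f(u) v dx`. -/
def phiDeriv (f u v : ℝ → ℝ) : ℝ :=
  innerX u v / (2 * π) - ∫ x in Ioo (0 : ℝ) 1, f (u x) * v x

/-- The Palais–Smale condition at level `c`. -/
def PalaisSmaleAt (f : ℝ → ℝ) (c : ℝ) : Prop :=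
  ∀ u : ℕ → ℝ → ℝ, (∀ n, memX (u n)) →
    Filter.Tendsto (fun n => phi f (u n)) Filter.atTop (𝓝 c) →
    (∃ ε : ℕ → ℝ, Filter.Tendsto ε Filter.atTop (𝓝 0) ∧
      ∀ n, ∀ v : ℝ → ℝ, memX v → gagNorm v ≤ 1 → |phiDeriv f (u n) v| ≤ ε n) →
    ∃ w : ℝ → ℝ, memX w ∧ ∃ g : ℕ → ℕ, StrictMono g ∧
      Filter.Tendsto (fun k => gagNorm (fun x => u (g k) x - w x)) Filter.atTop (𝓝 0)

/-!
Scaling `u ∈ X` with `[u] ≤ 1` by `√(2π)` gives an admissible function for the whole-line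
inequality, whose right-hand side is `2πH ‖u‖²_{L²}`. Since `u` is supported in `(0,1)`, the
Rayleigh quotient bound `λ₁ ‖u‖²_{L²(0,1)} ≤ [u]² ≤ 1` turns this into `2πH/λ₁`, and the
missing `∫₀¹ 1 dx` accounts for the `+ 1`. A crude Poincaré inequality (compare `u(x)` with the
value `0` on `(2,3)`) shows `λ₁ > 0` as soon as `X` contains a nonzero function.
-/

lemma gagKer_nonneg (u : ℝ → ℝ) (p : ℝ × ℝ) : 0 ≤ gagKer u p :=
  div_nonneg (sq_nonneg _) (sq_nonneg _)

lemma gagSq_nonneg (u : ℝ → ℝ) : 0 ≤ gagSq u :=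
  integral_nonneg (gagKer_nonneg u)

lemma gagKer_const_mul (c : ℝ) (u : ℝ → ℝ) :
    gagKer (fun x => c * u x) = fun p => c ^ 2 * gagKer u p := by
  funext p
  simp only [gagKer]
  rw [← mul_sub, mul_pow, mul_div_assoc]

lemma gagSq_const_mul (c : ℝ) (u : ℝ → ℝ) :
    gagSq (fun x => c * u x) = c ^ 2 * gagSq u := by
  rw [gagSq, gagKer_const_mul, gagSq, integral_const_mul]

lemma gagNorm_const_mul (c : ℝ) (u : ℝ → ℝ) :
    gagNorm (fun x => c * u x) = |c| * gagNorm u := by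
  rw [gagNorm, gagSq_const_mul, sqrt_mul (sq_nonneg c), sqrt_sq_eq_abs, gagNorm]

lemma gagSq_le_one_of_gagNorm_le_one {u : ℝ → ℝ} (hu : gagNorm u ≤ 1) : gagSq u ≤ 1 :=
  sqrt_le_one.mp hu

lemma memH.const_mul {u : ℝ → ℝ} (hu : memH u) (c : ℝ) : memH (fun x => c * u x) := by
  obtain ⟨hmeas, hL2, hker⟩ := hu
  refine ⟨measurable_const.mul hmeas, ?_, ?_⟩
  · simpa only [mul_pow] using hL2.const_mul (c ^ 2)
  · rw [gagKer_const_mul]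
    exact hker.const_mul _

lemma memX.const_mul {u : ℝ → ℝ} (hu : memX u) (c : ℝ) : memX (fun x => c * u x) := by
  refine ⟨hu.1.const_mul c, ?_⟩
  filter_upwards [hu.2] with x hx hxI
  rw [hx hxI, mul_zero]

lemma memX.setIntegral_sq_eq_integral_sq {u : ℝ → ℝ} (hu : memX u) :
    ∫ x in Ioo (0 : ℝ) 1, u x ^ 2 = ∫ x, u x ^ 2 := by
  apply setIntegral_eq_integral_of_ae_compl_eq_zero
  filter_upwards [hu.2] with x hx hxI
  rw [hx hxI, sq, mul_zero]

lemma sq_le_mul_gagKer_of_eq_zero {u : ℝ → ℝ} {x y d : ℝ} (hy : u y = 0) (hxy : |x - y| ≤ d) :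
    u x ^ 2 ≤ d ^ 2 * gagKer u (x, y) := by
  have hker : gagKer u (x, y) = u x ^ 2 / |x - y| ^ 2 := by simp [gagKer, hy]
  rcases (abs_nonneg (x - y)).eq_or_lt with hxy0 | hxy0
  · have : x = y := sub_eq_zero.mp (abs_eq_zero.mp hxy0.symm)
    rw [this, hy, zero_pow two_ne_zero]
    exact mul_nonneg (sq_nonneg d) (gagKer_nonneg u _)
  · calc u x ^ 2 = |x - y| ^ 2 * gagKer u (x, y) := by
          rw [hker]; field_simp
      _ ≤ d ^ 2 * gagKer u (x, y) := by
          gcongr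
          exact gagKer_nonneg u _

lemma memX.setIntegral_sq_le_nine_mul_gagSq {u : ℝ → ℝ} (hu : memX u) :
    ∫ x in Ioo (0 : ℝ) 1, u x ^ 2 ≤ 9 * gagSq u := by
  obtain ⟨⟨hmeas, hL2, hker⟩, hzero⟩ := hu
  set S : Set (ℝ × ℝ) := Ioo (0 : ℝ) 1 ×ˢ Ioo (2 : ℝ) 3
  have hS : MeasurableSet S := measurableSet_Ioo.prod measurableSet_Ioo
  have hfst : ∫⁻ p in S, ENNReal.ofReal (u p.1 ^ 2) =
      ∫⁻ x in Ioo (0 : ℝ) 1, ENNReal.ofReal (u x ^ 2) := by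
    have hm : Measurable fun p : ℝ × ℝ => ENNReal.ofReal (u p.1 ^ 2) :=
      ENNReal.measurable_ofReal.comp ((hmeas.comp measurable_fst).pow_const 2)
    rw [Measure.volume_eq_prod, ← Measure.prod_restrict, lintegral_prod _ hm.aemeasurable]
    norm_num [lintegral_const, volume_Ioo]
  have hpointwise : ∀ᵐ p ∂(volume.restrict S),
      ENNReal.ofReal (u p.1 ^ 2) ≤ ENNReal.ofReal (9 * gagKer u p) := by
    filter_upwards [ae_restrict_of_ae (Measure.quasiMeasurePreserving_snd.ae hzero),
      ae_restrict_mem hS] with p hp ⟨hp1, hp2⟩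
    have hu2 : u p.2 = 0 := hp fun h => by linarith [h.2, hp2.1]
    have hdist : |p.1 - p.2| ≤ 3 := by
      rw [abs_le]; constructor <;> linarith [hp1.1, hp1.2, hp2.1, hp2.2]
    exact ENNReal.ofReal_le_ofReal ((sq_le_mul_gagKer_of_eq_zero hu2 hdist).trans_eq (by norm_num))
  have hlint : ∫⁻ x in Ioo (0 : ℝ) 1, ENNReal.ofReal (u x ^ 2) ≤
      ENNReal.ofReal (9 * gagSq u) := by
    rw [← hfst]
    calc ∫⁻ p in S, ENNReal.ofReal (u p.1 ^ 2)
        ≤ ∫⁻ p in S, ENNReal.ofReal (9 * gagKer u p) := lintegral_mono_ae hpointwise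
      _ ≤ ∫⁻ p, ENNReal.ofReal (9 * gagKer u p) := setLIntegral_le_lintegral _ _
      _ = ENNReal.ofReal (9 * gagSq u) := by
          rw [← ofReal_integral_eq_lintegral_ofReal (hker.const_mul 9)
            (ae_of_all _ fun p => mul_nonneg (by norm_num) (gagKer_nonneg u p)),
            integral_const_mul, gagSq]
  rw [← ofReal_integral_eq_lintegral_ofReal hL2.integrableOn
    (ae_of_all _ fun x => sq_nonneg _)] at hlint
  exact (ENNReal.ofReal_le_ofReal_iff (mul_nonneg (by norm_num) (gagSq_nonneg u))).mp hlint

def rayleighValues : Set ℝ :=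
  { t : ℝ | ∃ u : ℝ → ℝ, memX u ∧ (∫ x in Ioo (0 : ℝ) 1, (u x) ^ 2) = 1 ∧ gagSq u = t }

lemma lam1_eq_sInf_rayleighValues : lam1 = sInf rayleighValues := rfl

lemma one_div_nine_le_of_mem_rayleighValues {t : ℝ} (ht : t ∈ rayleighValues) : 1 / 9 ≤ t := by
  obtain ⟨u, hu, hnorm, rfl⟩ := ht
  have := hu.setIntegral_sq_le_nine_mul_gagSq
  linarith

lemma nonneg_of_mem_rayleighValues {t : ℝ} (ht : t ∈ rayleighValues) : 0 ≤ t :=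
  (one_div_nine_le_of_mem_rayleighValues ht).trans' (by norm_num)

lemma lam1_nonneg : 0 ≤ lam1 := by
  rw [lam1_eq_sInf_rayleighValues]
  exact sInf_nonneg fun _ => nonneg_of_mem_rayleighValues

lemma memX.gagSq_div_mem_rayleighValues {u : ℝ → ℝ} (hu : memX u)
    (hI : 0 < ∫ x in Ioo (0 : ℝ) 1, u x ^ 2) :
    gagSq u / (∫ x in Ioo (0 : ℝ) 1, u x ^ 2) ∈ rayleighValues := by
  set I := ∫ x in Ioo (0 : ℝ) 1, u x ^ 2
  have hc : ((√I)⁻¹) ^ 2 = I⁻¹ := by rw [inv_pow, sq_sqrt hI.le]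
  refine ⟨fun x => (√I)⁻¹ * u x, hu.const_mul _, ?_, ?_⟩
  · simp only [mul_pow, hc, integral_const_mul]
    exact inv_mul_cancel₀ hI.ne'
  · rw [gagSq_const_mul, hc, inv_mul_eq_div]

lemma memX.setIntegral_sq_le_gagSq_div_lam1 {u : ℝ → ℝ} (hu : memX u) :
    ∫ x in Ioo (0 : ℝ) 1, u x ^ 2 ≤ gagSq u / lam1 := by
  rcases (integral_nonneg fun x => sq_nonneg (u x) :
      0 ≤ ∫ x in Ioo (0 : ℝ) 1, u x ^ 2).eq_or_lt with hI | hI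
  · rw [← hI]
    exact div_nonneg (gagSq_nonneg u) lam1_nonneg
  have hmem := hu.gagSq_div_mem_rayleighValues hI
  have hlam : 0 < lam1 := by
    rw [lam1_eq_sInf_rayleighValues]
    exact lt_of_lt_of_le (by norm_num)
      (le_csInf ⟨_, hmem⟩ fun _ => one_div_nine_le_of_mem_rayleighValues)
  have hle : lam1 ≤ gagSq u / ∫ x in Ioo (0 : ℝ) 1, u x ^ 2 := by
    rw [lam1_eq_sInf_rayleighValues]
    exact csInf_le ⟨0, fun _ => nonneg_of_mem_rayleighValues⟩ hmem
  rw [le_div_iff₀ hlam, mul_comm]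
  rwa [le_div_iff₀ hI] at hle

lemma setLIntegral_ofReal_le_lintegral_ofReal_sub_one_add {X : Type*} [MeasurableSpace X]
    (μ : Measure X) (s : Set X) (f : X → ℝ) :
    ∫⁻ x in s, ENNReal.ofReal (f x) ∂μ ≤ ∫⁻ x, ENNReal.ofReal (f x - 1) ∂μ + μ s :=
  calc ∫⁻ x in s, ENNReal.ofReal (f x) ∂μ
      ≤ ∫⁻ x in s, (ENNReal.ofReal (f x - 1) + 1) ∂μ := lintegral_mono fun x => by
        simpa using ENNReal.ofReal_add_le (p := f x - 1) (q := 1)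
    _ = ∫⁻ x in s, ENNReal.ofReal (f x - 1) ∂μ + μ s := by
        rw [lintegral_add_right _ measurable_const, setLIntegral_const, one_mul]
    _ ≤ ∫⁻ x, ENNReal.ofReal (f x - 1) ∂μ + μ s :=
        add_le_add_left (setLIntegral_le_lintegral _ _) _

theorem statement7_general
    (α : ℝ)
    (H : ℝ) (hH0 : 0 < H)
    (hOzawa : ∀ v : ℝ → ℝ, memH v → gagNorm v ≤ Real.sqrt (2 * π) →
      (∫⁻ x : ℝ, ENNReal.ofReal (exp ((α / (2 * π)) * (v x) ^ 2) - 1)) ≤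
        ENNReal.ofReal (H * ∫ x : ℝ, (v x) ^ 2)) :
    ∀ u : ℝ → ℝ, memX u → gagNorm u ≤ 1 →
      (∫⁻ x in Ioo (0 : ℝ) 1, ENNReal.ofReal (exp (α * (u x) ^ 2))) ≤
        ENNReal.ofReal (2 * π * H / lam1 + 1) := by
  intro u hu hnorm
  have h2π : 0 < 2 * π := by positivity
  set v : ℝ → ℝ := fun x => √(2 * π) * u x
  have hv_sq : ∀ x, v x ^ 2 = 2 * π * u x ^ 2 := fun x => by
    rw [mul_pow, sq_sqrt h2π.le]
  have hv_norm : gagNorm v ≤ √(2 * π) := by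
    rw [gagNorm_const_mul, abs_of_nonneg (sqrt_nonneg _)]
    exact mul_le_of_le_one_right (sqrt_nonneg _) hnorm
  have hv_exp : ∀ x, α / (2 * π) * v x ^ 2 = α * u x ^ 2 := fun x => by
    rw [hv_sq]; field_simp
  have hv_L2 : ∫ x, v x ^ 2 = 2 * π * ∫ x in Ioo (0 : ℝ) 1, u x ^ 2 := by
    simp only [hv_sq, integral_const_mul, hu.setIntegral_sq_eq_integral_sq]
  have hL2_bound : H * (2 * π * ∫ x in Ioo (0 : ℝ) 1, u x ^ 2) ≤ 2 * π * H / lam1 := by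
    have hI : ∫ x in Ioo (0 : ℝ) 1, u x ^ 2 ≤ 1 / lam1 :=
      hu.setIntegral_sq_le_gagSq_div_lam1.trans
        (div_le_div_of_nonneg_right (gagSq_le_one_of_gagNorm_le_one hnorm) lam1_nonneg)
    calc H * (2 * π * ∫ x in Ioo (0 : ℝ) 1, u x ^ 2) ≤ H * (2 * π * (1 / lam1)) := by gcongr
      _ = 2 * π * H / lam1 := by ring
  have hOz := hOzawa v (hu.1.const_mul _) hv_norm
  simp only [hv_exp, hv_L2] at hOz
  calc ∫⁻ x in Ioo (0 : ℝ) 1, ENNReal.ofReal (exp (α * u x ^ 2))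
      ≤ (∫⁻ x, ENNReal.ofReal (exp (α * u x ^ 2) - 1)) + volume (Ioo (0 : ℝ) 1) :=
        setLIntegral_ofReal_le_lintegral_ofReal_sub_one_add volume _ fun x => exp (α * u x ^ 2)
    _ ≤ ENNReal.ofReal (2 * π * H / lam1) + ENNReal.ofReal 1 := by
        rw [volume_Ioo, sub_zero]
        exact add_le_add_left (hOz.trans (ENNReal.ofReal_le_ofReal hL2_bound)) _
    _ = ENNReal.ofReal (2 * π * H / lam1 + 1) :=
        (ENNReal.ofReal_add (div_nonneg (by positivity) lam1_nonneg) zero_le_one).symm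

/-- Trudinger–Moser inequality on `X` (Corollary 2.4). -/
theorem statement7 (ω : ℝ) (hω0 : 0 < ω) (hωπ : ω ≤ π)
    (α : ℝ) (hα0 : 0 < α) (hα : α < 2 * π * ω)
    (H : ℝ) (hH0 : 0 < H)
    (hOzawa : ∀ v : ℝ → ℝ, memH v → gagNorm v ≤ Real.sqrt (2 * π) →
      (∫⁻ x : ℝ, ENNReal.ofReal (exp ((α / (2 * π)) * (v x) ^ 2) - 1)) ≤
        ENNReal.ofReal (H * ∫ x : ℝ, (v x) ^ 2)) :
    ∀ u : ℝ → ℝ, memX u → gagNorm u ≤ 1 →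
      (∫⁻ x in Ioo (0 : ℝ) 1, ENNReal.ofReal (exp (α * (u x) ^ 2))) ≤
        ENNReal.ofReal (2 * π * H / lam1 + 1) :=
  statement7_general α H hH0 hOzawa
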